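/- Let (m,n) be a coprime pair of positive integers and let R be the rank set of an (m,n)-Dyck path. Then the rank complement 𝔠(R) = { (max R) − r : r ∈ R } is also the rank set of an (m,n)-Dyck path; conversely, if 𝔠(R) is the rank set of an (m,n)-Dyck path then so is R. -/

import Mathlib

/-- The list of ranks of the lattice points visited by a path (excluding the final
point), starting from rank `r`.  A `true` entry is a north (`u`) step, which adds `m`
to the rank; a `false` entry is an east (`d`) step, which subtracts `n`. -/
def rankWalk (m n : ℤ) : List Bool → ℤ → List ℤ
  | [], _ => []
  | b :: bs, r => r :: rankWalk m n bs (r + if b then m else -n)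

/-- An `(m,n)`-path: a word of `n` north steps (`true`) and `m` east steps (`false`). -/
def IsPathWord (m n : ℕ) (P : List Bool) : Prop :=
  P.length = m + n ∧ P.count true = n

/-- An `(m,n)`-Dyck path: an `(m,n)`-path all of whose ranks are nonnegative. -/
def IsDyckWord (m n : ℕ) (P : List Bool) : Prop :=
  IsPathWord m n P ∧ ∀ r ∈ rankWalk (m : ℤ) (n : ℤ) P 0, 0 ≤ r

/-- The rank set of a path: the ranks of its `m+n` lattice points other than the endpoint. -/
def rankSet (m n : ℕ) (P : List Bool) : Finset ℤ :=
  (rankWalk (m : ℤ) (n : ℤ) P 0).toFinset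

/-- `R` is the rank set of some `(m,n)`-path. -/
def IsRankSet (m n : ℕ) (R : Finset ℤ) : Prop :=
  ∃ P : List Bool, IsPathWord m n P ∧ rankSet m n P = R

/-- `R` is the rank set of some `(m,n)`-Dyck path. -/
def IsDyckRankSet (m n : ℕ) (R : Finset ℤ) : Prop :=
  ∃ P : List Bool, IsDyckWord m n P ∧ rankSet m n P = R

/-- The rank complement `𝔠(R) = (max R) - R`. -/
def rankCompl (R : Finset ℤ) : Finset ℤ :=
  R.image (fun r => WithBot.unbotD 0 R.max - r)

/-!
Reading a closed path backwards negates its ranks, and starting it at another lattice point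
shifts them. So if `P` attains the maximal rank `M` at the split `P = A ++ B`, the ranks of
`(B ++ A).reverse` are exactly `M - r` for the ranks `r` of `P`; these are nonnegative, so this
is a Dyck path with rank set `𝔠(R)`. When `min R = 0`, `𝔠` is an involution, giving the converse.
-/

def stepSum (m n : ℤ) (P : List Bool) : ℤ :=
  (P.map fun b => if b then m else -n).sum

section RankWalk

variable {m n : ℤ}

@[simp]
lemma stepSum_nil : stepSum m n [] = 0 := rfl

@[simp]
lemma stepSum_cons (b : Bool) (P : List Bool) :
    stepSum m n (b :: P) = (if b then m else -n) + stepSum m n P := by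
  simp [stepSum]

@[simp]
lemma stepSum_append (A B : List Bool) :
    stepSum m n (A ++ B) = stepSum m n A + stepSum m n B := by
  simp [stepSum]

lemma stepSum_eq_count (P : List Bool) :
    stepSum m n P = P.count true * m - P.count false * n := by
  induction P with
  | nil => simp
  | cons b P ih => cases b <;> simp [ih] <;> ring

lemma List.Perm.stepSum_eq {P Q : List Bool} (h : P.Perm Q) : stepSum m n P = stepSum m n Q :=
  (h.map _).sum_eq

lemma rankWalk_add (P : List Bool) (r s : ℤ) :
    rankWalk m n P (r + s) = (rankWalk m n P r).map (· + s) := by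
  induction P generalizing r with
  | nil => rfl
  | cons b P ih =>
    simp only [rankWalk, List.map_cons, ← ih]
    congr 2
    ring

lemma rankWalk_append (A B : List Bool) (r : ℤ) :
    rankWalk m n (A ++ B) r = rankWalk m n A r ++ rankWalk m n B (r + stepSum m n A) := by
  induction A generalizing r with
  | nil => simp [rankWalk]
  | cons b A ih =>
    simp only [List.cons_append, rankWalk, ih, stepSum_cons, add_assoc]

lemma rankWalk_reverse_append (P : List Bool) :
    rankWalk m n P.reverse 0 ++ [stepSum m n P] =
      ((rankWalk m n P 0 ++ [stepSum m n P]).reverse).map (stepSum m n P - ·) := by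
  induction P with
  | nil => simp [rankWalk]
  | cons b P ih =>
    have hcons : rankWalk m n (b :: P) 0 ++ [stepSum m n (b :: P)] =
        0 :: (rankWalk m n P 0 ++ [stepSum m n P]).map (· + if b then m else -n) := by
      rw [rankWalk, zero_add, ← zero_add (if b then m else -n), rankWalk_add]
      simp [add_comm]
    rw [hcons, List.reverse_cons, rankWalk_append, (List.reverse_perm P).stepSum_eq, zero_add,
      show rankWalk m n [b] (stepSum m n P) = [stepSum m n P] from rfl, ih]
    simp only [List.map_append, List.map_reverse, List.map_map, List.map_cons, List.map_nil,
      List.reverse_cons, stepSum_cons, Function.comp_def]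
    congr 2 <;> ring_nf

lemma exists_append_of_mem_rankWalk {P : List Bool} {r x : ℤ} (hx : x ∈ rankWalk m n P r) :
    ∃ A B, P = A ++ B ∧ r + stepSum m n A = x := by
  induction P generalizing r with
  | nil => simp [rankWalk] at hx
  | cons b P ih =>
    rcases List.mem_cons.mp hx with rfl | hx
    · exact ⟨[], b :: P, rfl, by simp⟩
    · obtain ⟨A, B, rfl, hA⟩ := ih hx
      exact ⟨b :: A, B, rfl, by rw [← hA, stepSum_cons]; ring⟩

end RankWalk

lemma List.toFinset_map_eq_image {α β : Type*} [DecidableEq α] [DecidableEq β] (f : α → β)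
    (l : List α) : (l.map f).toFinset = l.toFinset.image f :=
  Multiset.toFinset_map f l

section RankSet

variable {m n : ℕ}

lemma IsPathWord.stepSum_eq_zero {P : List Bool} (h : IsPathWord m n P) :
    stepSum m n P = 0 := by
  have hfalse : P.count false = m := by
    have := List.count_false_add_count_true P
    rw [h.1, h.2] at this
    omega
  rw [stepSum_eq_count, h.2, hfalse]
  ring

lemma IsPathWord.perm {P Q : List Bool} (h : IsPathWord m n P) (hPQ : P.Perm Q) :
    IsPathWord m n Q :=
  ⟨hPQ.length_eq ▸ h.1, hPQ.count_eq true ▸ h.2⟩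

lemma zero_mem_rankSet {P : List Bool} (hP : P ≠ []) : 0 ∈ rankSet m n P := by
  obtain ⟨b, P, rfl⟩ := List.exists_cons_of_ne_nil hP
  simp [rankSet, rankWalk]

lemma rankSet_append_comm {A B : List Bool} (h : stepSum m n (A ++ B) = 0) :
    rankSet m n (A ++ B) = (rankSet m n (B ++ A)).image (· + stepSum m n A) := by
  have hA : rankWalk m n A 0 = (rankWalk m n A (stepSum m n B)).map (· + stepSum m n A) := by
    rw [← rankWalk_add, ← stepSum_append, (List.perm_append_comm).stepSum_eq, h]
  have hB : rankWalk m n B (stepSum m n A) = (rankWalk m n B 0).map (· + stepSum m n A) := by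
    rw [← rankWalk_add, zero_add]
  simp only [rankSet, rankWalk_append, zero_add, hA, hB, ← List.map_append,
    List.toFinset_map_eq_image, List.toFinset_append, Finset.union_comm]

lemma rankSet_reverse {P : List Bool} (h : stepSum m n P = 0) :
    rankSet m n P.reverse = (rankSet m n P).image Neg.neg := by
  rcases eq_or_ne P [] with rfl | hP
  · rfl
  have hrev := congrArg List.toFinset (rankWalk_reverse_append (m := m) (n := n) P)
  simp only [h, List.toFinset_append, List.toFinset_map_eq_image, List.toFinset_reverse,
    Finset.image_union, zero_sub, ← rankSet.eq_1, List.toFinset_cons, List.toFinset_nil,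
    insert_empty_eq, Finset.image_singleton, neg_zero] at hrev
  have hzero (Q : List Bool) (hQ : Q ≠ []) : rankSet m n Q ∪ {0} = rankSet m n Q :=
    Finset.union_eq_left.mpr (Finset.singleton_subset_iff.mpr (zero_mem_rankSet hQ))
  rw [hzero _ (List.reverse_ne_nil_iff.mpr hP)] at hrev
  rw [hrev, Finset.union_eq_left.mpr]
  exact Finset.singleton_subset_iff.mpr (Finset.mem_image.mpr ⟨0, zero_mem_rankSet hP, neg_zero⟩)

end RankSet

lemma rankCompl_eq_image {R : Finset ℤ} {M : ℤ} (hM : M ∈ R) (hle : ∀ r ∈ R, r ≤ M) :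
    rankCompl R = R.image (M - ·) := by
  have hmax : R.max = M :=
    le_antisymm (Finset.max_le fun r hr => WithBot.coe_le_coe.mpr (hle r hr)) (Finset.le_max hM)
  rw [rankCompl, hmax, WithBot.unbotD_coe]

lemma rankCompl_rankCompl {R : Finset ℤ} (h0 : 0 ∈ R) (hpos : ∀ r ∈ R, 0 ≤ r) :
    rankCompl (rankCompl R) = R := by
  obtain ⟨M, hM, hle⟩ := R.exists_max_image id ⟨0, h0⟩
  have hcompl := rankCompl_eq_image hM hle
  have hM' : M ∈ rankCompl R := hcompl ▸ Finset.mem_image.mpr ⟨0, h0, sub_zero M⟩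
  have hle' : ∀ s ∈ rankCompl R, s ≤ M := by
    intro s hs
    obtain ⟨r, hr, rfl⟩ := Finset.mem_image.mp (hcompl ▸ hs)
    linarith [hpos r hr]
  rw [rankCompl_eq_image hM' hle', hcompl, Finset.image_image]
  simp

lemma IsRankSet.isDyckRankSet_rankCompl {m n : ℕ} {R : Finset ℤ} (hR : IsRankSet m n R) :
    IsDyckRankSet m n (rankCompl R) := by
  obtain ⟨P, hP, rfl⟩ := hR
  rcases eq_or_ne P [] with rfl | hne
  · exact ⟨[], ⟨hP, by simp [rankWalk]⟩, by simp [rankSet, rankWalk, rankCompl]⟩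
  obtain ⟨M, hM, hle⟩ := (rankSet m n P).exists_max_image id ⟨0, zero_mem_rankSet hne⟩
  obtain ⟨A, B, rfl, hA⟩ := exists_append_of_mem_rankWalk (List.mem_toFinset.mp hM)
  rw [zero_add] at hA
  have hclosed := hP.stepSum_eq_zero
  have hQ : rankSet m n (B ++ A).reverse = rankCompl (rankSet m n (A ++ B)) := by
    rw [rankCompl_eq_image hM hle, rankSet_append_comm hclosed, Finset.image_image, hA,
      rankSet_reverse ((List.perm_append_comm.stepSum_eq).trans hclosed)]
    congr 1
    funext r
    simp
  refine ⟨(B ++ A).reverse, ⟨hP.perm (List.perm_append_comm.trans (List.reverse_perm _).symm),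
    fun r hr => ?_⟩, hQ⟩
  have hr : r ∈ rankCompl (rankSet m n (A ++ B)) := hQ ▸ List.mem_toFinset.mpr hr
  rw [rankCompl_eq_image hM hle] at hr
  obtain ⟨s, hs, rfl⟩ := Finset.mem_image.mp hr
  exact sub_nonneg.mpr (hle s hs)

lemma IsDyckRankSet.isRankSet {m n : ℕ} {R : Finset ℤ} (hR : IsDyckRankSet m n R) :
    IsRankSet m n R :=
  let ⟨P, hP, hR⟩ := hR
  ⟨P, hP.1, hR⟩

theorem dyck_rank_set_compl_general (m n : ℕ) (R : Finset ℤ)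
    (h0 : (0 : ℤ) ∈ R) (hpos : ∀ r ∈ R, 0 ≤ r) :
    IsDyckRankSet m n R ↔ IsDyckRankSet m n (rankCompl R) := by
  refine ⟨fun h => h.isRankSet.isDyckRankSet_rankCompl, fun h => ?_⟩
  simpa [rankCompl_rankCompl h0 hpos] using h.isRankSet.isDyckRankSet_rankCompl

/-- For a coprime pair `(m,n)` of positive integers and a set `R` of
`m + n` nonnegative integers containing `0`: if `R` is the rank set of an `(m,n)`-Dyck
path then so is the rank complement `𝔠(R) = (max R) - R`, and conversely. -/
theorem dyck_rank_set_compl (m n : ℕ) (hm : 0 < m) (hn : 0 < n)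
    (hcop : Nat.Coprime m n) (R : Finset ℤ) (hcard : R.card = m + n)
    (h0 : (0 : ℤ) ∈ R) (hpos : ∀ r ∈ R, 0 ≤ r) :
    IsDyckRankSet m n R ↔ IsDyckRankSet m n (rankCompl R) :=
  dyck_rank_set_compl_general m n R h0 hpos
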